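/- arXiv:2102.13540 — 3 statements merged into one kernel-verified Lean document; each statement's English description precedes it below -/
import Mathlib

section
/- Let t ≥ 0 and let t_1,…,t_k be positive, pairwise distinct, and distinct from t. Define q(z) = ∏_{j=1}^k (z + t_j) and let p̄ be the unique polynomial of degree ≤ k−1 with p̄(t_i) = (t + t_i)^{-1} q(t_i) for i = 1,…,k. Then for all z with z ≠ −t and z ∉ {−t_1,…,−t_k}, (t+z)^{-1} − p̄(z)/q(z) = c(t)·∏_{j=1}^k (z − t_j) / ((t+z) ∏_{j=1}^k (z + t_j)), where c(t) = ∏_{j=1}^k (t − t_j)/(t + t_j). -/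
/-!
The polynomial `S(z) = q(z) - (z + t) p̄(z) - c(t) ∏ⱼ (z - tⱼ)` has degree at most `k`. It
vanishes at every node `tᵢ` by the interpolation conditions, and at `z = -t` because every factor
of `c(t)` satisfies `(t - tⱼ) / (t + tⱼ) · (-t - tⱼ) = -t + tⱼ`. With `k + 1` distinct roots,
`S = 0`, and dividing `S(z) = 0` by `(t + z) q(z)` gives the formula.
-/

open Polynomial

section

variable {K : Type*} [Field K] {k : ℕ}

lemma natDegree_prod_X_add_C_le (a : Fin k → K) : (∏ j, (X + C (a j))).natDegree ≤ k :=
  (natDegree_prod_le _ _).trans (by simp)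

lemma natDegree_prod_X_sub_C_le (a : Fin k → K) : (∏ j, (X - C (a j))).natDegree ≤ k :=
  (natDegree_prod_le _ _).trans (by simp)

lemma natDegree_X_add_C_mul_le {p : K[X]} (hp : p.degree < k) (t : K) :
    ((X + C t) * p).natDegree ≤ k := by
  rcases eq_or_ne p 0 with rfl | hp0
  · simp
  · have := (natDegree_lt_iff_degree_lt hp0).2 hp
    exact natDegree_mul_le.trans (by rw [natDegree_X_add_C]; omega)

lemma prod_div_mul_prod_neg_sub {t : K} {ts : Fin k → K} (hne : ∀ j, t + ts j ≠ 0) :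
    (∏ j, (t - ts j) / (t + ts j)) * ∏ j, (-t - ts j) = ∏ j, (-t + ts j) := by
  rw [← Finset.prod_mul_distrib]
  refine Finset.prod_congr rfl fun j _ => ?_
  field_simp [hne j]
  ring

theorem prod_X_add_C_sub_mul_eq_of_interpolates {ts : Fin k → K}
    (hinj : Function.Injective ts) {t : K} (hne : ∀ j, t + ts j ≠ 0) {p : K[X]}
    (hdeg : p.degree < k) (hinterp : ∀ i, p.eval (ts i) = (t + ts i)⁻¹ * ∏ j, (ts i + ts j)) :
    ∏ j, (X + C (ts j)) - (X + C t) * p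
      = C (∏ j, (t - ts j) / (t + ts j)) * ∏ j, (X - C (ts j)) := by
  have hnodes : Function.Injective (Fin.cons (-t) ts : Fin (k + 1) → K) := by
    refine Fin.cons_injective_of_injective ?_ hinj
    rintro ⟨j, hj⟩
    exact hne j (by rw [hj]; ring)
  set S : K[X] := ∏ j, (X + C (ts j)) - (X + C t) * p
    - C (∏ j, (t - ts j) / (t + ts j)) * ∏ j, (X - C (ts j))
  have hroots : ∀ i, S.eval ((Fin.cons (-t) ts : Fin (k + 1) → K) i) = 0 := by
    refine Fin.cases ?_ fun i => ?_
    · simp only [S, Fin.cons_zero, eval_sub, eval_mul, eval_add, eval_X, eval_C, eval_prod,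
        ← prod_div_mul_prod_neg_sub hne]
      ring
    · have hvanish : ∏ j, (ts i - ts j) = 0 :=
        Finset.prod_eq_zero (Finset.mem_univ i) (sub_self _)
      simp only [S, Fin.cons_succ, eval_sub, eval_mul, eval_add, eval_X, eval_C, eval_prod,
        hinterp, hvanish]
      rw [add_comm, ← mul_assoc, mul_inv_cancel₀ (hne i)]
      ring
  have hdegS : S.natDegree ≤ k := by
    refine (natDegree_sub_le _ _).trans (max_le ((natDegree_sub_le _ _).trans
      (max_le (natDegree_prod_X_add_C_le ts) (natDegree_X_add_C_mul_le hdeg t))) ?_)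
    exact (natDegree_C_mul_le _ _).trans (natDegree_prod_X_sub_C_le ts)
  rw [← sub_eq_zero]
  exact eq_zero_of_natDegree_lt_card_of_eval_eq_zero S hnodes hroots
    (by simpa using Nat.lt_succ_of_le hdegS)

end

theorem stmt_7_general {k : ℕ} (t : ℝ) (ht : 0 ≤ t)
    (ts : Fin k → ℝ) (hts : ∀ j, 0 < ts j) (htsinj : Function.Injective ts)
    (pbar : Polynomial ℝ) (hdeg : pbar.degree < (k : ℕ))
    (hinterp : ∀ i, pbar.eval (ts i) = (t + ts i)⁻¹ * ∏ j, (ts i + ts j)) :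
    ∀ z : ℝ, z ≠ -t → (∀ j, z ≠ -(ts j)) →
      (t + z)⁻¹ - pbar.eval z / ∏ j, (z + ts j)
        = (∏ j, (t - ts j) / (t + ts j)) * (∏ j, (z - ts j))
            / ((t + z) * ∏ j, (z + ts j)) := by
  intro z hzt hzts
  have hne : ∀ j, t + ts j ≠ 0 := fun j => (add_pos_of_nonneg_of_pos ht (hts j)).ne'
  have htz : t + z ≠ 0 := fun h => hzt (by linear_combination h)
  have hq : ∏ j, (z + ts j) ≠ 0 :=
    Finset.prod_ne_zero_iff.2 fun j _ h => hzts j (by linear_combination h)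
  have key := congrArg (eval z) (prod_X_add_C_sub_mul_eq_of_interpolates htsinj hne hdeg hinterp)
  simp only [eval_sub, eval_mul, eval_add, eval_X, eval_C, eval_prod] at key
  field_simp
  linear_combination key

/-- explicit form of the interpolation error for the resolvent. -/
theorem stmt_7 {k : ℕ} (hk : 0 < k) (t : ℝ) (ht : 0 ≤ t)
    (ts : Fin k → ℝ) (hts : ∀ j, 0 < ts j) (htsinj : Function.Injective ts)
    (htne : ∀ j, t ≠ ts j)
    (pbar : Polynomial ℝ) (hdeg : pbar.degree < (k : ℕ))
    (hinterp : ∀ i, pbar.eval (ts i) = (t + ts i)⁻¹ * ∏ j, (ts i + ts j)) :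
    ∀ z : ℝ, z ≠ -t → (∀ j, z ≠ -(ts j)) →
      (t + z)⁻¹ - pbar.eval z / ∏ j, (z + ts j)
        = (∏ j, (t - ts j) / (t + ts j)) * (∏ j, (z - ts j))
            / ((t + z) * ∏ j, (z + ts j)) :=
  stmt_7_general t ht ts hts htsinj pbar hdeg hinterp
end

section
/- Let 0 < λ_l ≤ λ_u, t ≥ 0, and t_1,…,t_k positive pairwise distinct. Then there exists a polynomial p of degree ≤ k such that sup_{z ∈ [λ_l, λ_u]} |(t+z)^{-1} − p(z)/q(z)| ≤ (t + λ_l)^{-1} · sup_{z∈[λ_l,λ_u]} ∏_{j=1}^k |z − t_j|/|z + t_j|, where q(z) = ∏_{j=1}^k (z + t_j). -/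
/-!
Put `Q(z) = ∏ j, (z + t_j)` and `P(z) = ∏ j, (z - t_j)`, so that `Θ = P / Q`. With
`c = Q(-t) / P(-t)` the polynomial `Q - c P` vanishes at `-t`, hence equals `(z + t) p(z)` with
`deg p ≤ k`, and then `(t + z)⁻¹ - p(z) / Q(z) = c Θ(z) / (t + z)`. Finally `|c| = |Θ(t)| ≤ 1`
because `t ≥ 0`, and `(t + z)⁻¹ ≤ (t + λ_l)⁻¹` on `[λ_l, λ_u]`.
-/

open Polynomial

theorem Polynomial.exists_X_sub_C_mul_eq_sub_C_mul {K : Type*} [Field K] {Q P : K[X]} {a : K}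
    {n : ℕ} (hQ : Q.natDegree ≤ n) (hP : P.natDegree ≤ n) (hPa : P.eval a ≠ 0) :
    ∃ p : K[X], p.natDegree ≤ n ∧ (X - C a) * p = Q - C (Q.eval a / P.eval a) * P := by
  set N := Q - C (Q.eval a / P.eval a) * P
  have hroot : N.IsRoot a := by simp [N, div_mul_cancel₀ _ hPa]
  refine ⟨N /ₘ (X - C a), ?_, mul_divByMonic_eq_iff_isRoot.mpr hroot⟩
  calc (N /ₘ (X - C a)).natDegree ≤ N.natDegree := natDegree_le_natDegree (degree_divByMonic_le _ _)
    _ ≤ n := (natDegree_sub_le _ _).trans (max_le hQ ((natDegree_C_mul_le _ _).trans hP))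

theorem inv_sub_div_eq_of_sub_mul_eq {K : Type*} [Field K] {a q r c s : K}
    (h : q - c * r = a * s) (ha : a ≠ 0) (hq : q ≠ 0) : a⁻¹ - s / q = c * (r / q) / a := by
  field_simp
  linear_combination h

theorem abs_sub_div_abs_add_le_one {a b : ℝ} (ha : 0 ≤ a) (hb : 0 ≤ b) : |a - b| / |a + b| ≤ 1 :=
  div_le_one_of_le₀ (by rw [abs_of_nonneg (add_nonneg ha hb), abs_le]; constructor <;> linarith)
    (abs_nonneg _)

section absTheta

variable {ι : Type*} [Fintype ι] (ts : ι → ℝ)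

/-- `|Θ(w)|` for `Θ(z) = ∏ j, (z - t_j) / (z + t_j)`. -/
noncomputable def absTheta (w : ℝ) : ℝ := ∏ j, |w - ts j| / |w + ts j|

theorem absTheta_nonneg (w : ℝ) : 0 ≤ absTheta ts w :=
  Finset.prod_nonneg fun _ _ => by positivity

variable {ts}

theorem absTheta_le_one (hts : ∀ j, 0 ≤ ts j) {w : ℝ} (hw : 0 ≤ w) : absTheta ts w ≤ 1 :=
  Finset.prod_le_one (fun _ _ => by positivity) fun j _ => abs_sub_div_abs_add_le_one hw (hts j)

theorem absTheta_le_iSup_Icc (hts : ∀ j, 0 ≤ ts j) {ll lu w : ℝ} (hll : 0 ≤ ll)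
    (hw : w ∈ Set.Icc ll lu) : absTheta ts w ≤ ⨆ v : Set.Icc ll lu, absTheta ts v :=
  le_ciSup (f := fun v : Set.Icc ll lu => absTheta ts v)
    ⟨1, by rintro _ ⟨v, rfl⟩; exact absTheta_le_one hts (hll.trans v.2.1)⟩ ⟨w, hw⟩

variable (ts)

theorem abs_prod_sub_div_prod_add (w : ℝ) :
    |(∏ j, (w - ts j)) / ∏ j, (w + ts j)| = absTheta ts w := by
  rw [abs_div, Finset.abs_prod, Finset.abs_prod, absTheta, Finset.prod_div_distrib]

theorem abs_prod_neg_add_div_prod_neg_sub (t : ℝ) :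
    |(∏ j, (-t + ts j)) / ∏ j, (-t - ts j)| = absTheta ts t := by
  rw [← abs_prod_sub_div_prod_add, abs_div, abs_div, Finset.abs_prod, Finset.abs_prod,
    Finset.abs_prod, Finset.abs_prod]
  congr 1 <;> refine Finset.prod_congr rfl fun j _ => ?_ <;> rw [← abs_neg] <;> ring_nf

end absTheta

theorem stmt_9_general {k : ℕ} (ll lu t : ℝ) (hll : 0 < ll) (ht : 0 ≤ t)
    (ts : Fin k → ℝ) (hts : ∀ j, 0 < ts j) :
    ∃ p : Polynomial ℝ, p.degree ≤ (k : ℕ) ∧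
      ∀ z ∈ Set.Icc ll lu,
        |(t + z)⁻¹ - p.eval z / ∏ j, (z + ts j)|
          ≤ (t + ll)⁻¹ * ⨆ w : Set.Icc ll lu, ∏ j, |(w : ℝ) - ts j| / |(w : ℝ) + ts j| := by
  have hPt : (∏ j, (X - C (ts j))).eval (-t) ≠ 0 := by
    simp only [eval_prod, eval_sub, eval_X, eval_C]
    exact Finset.prod_ne_zero_iff.mpr fun j _ => by linarith [hts j]
  obtain ⟨p, hpdeg, hp⟩ := exists_X_sub_C_mul_eq_sub_C_mul (Q := ∏ j, (X + C (ts j))) (n := k)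
    ((natDegree_prod_le _ _).trans (by simp))
    ((natDegree_prod_le _ _).trans (by simp)) hPt
  have hc : |(∏ j, (X + C (ts j))).eval (-t) / (∏ j, (X - C (ts j))).eval (-t)| ≤ 1 := by
    simp only [eval_prod, eval_add, eval_sub, eval_X, eval_C]
    rw [abs_prod_neg_add_div_prod_neg_sub]
    exact absTheta_le_one (fun j => (hts j).le) ht
  generalize (∏ j, (X + C (ts j))).eval (-t) / (∏ j, (X - C (ts j))).eval (-t) = c at hp hc
  refine ⟨p, degree_le_of_natDegree_le hpdeg, fun z hz => ?_⟩
  have htz : 0 < t + z := by linarith [hz.1]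
  have hfactor := congrArg (eval z) hp
  simp only [eval_mul, eval_sub, eval_add, eval_X, eval_C, eval_prod, sub_neg_eq_add] at hfactor
  rw [add_comm z t] at hfactor
  rw [inv_sub_div_eq_of_sub_mul_eq hfactor.symm htz.ne'
    (Finset.prod_ne_zero_iff.mpr fun j _ => by linarith [hts j, hz.1])]
  calc _ = |c| * absTheta ts z * (t + z)⁻¹ := by
        rw [abs_div, abs_mul, abs_prod_sub_div_prod_add, abs_of_pos htz, div_eq_mul_inv]
    _ ≤ 1 * (⨆ w : Set.Icc ll lu, absTheta ts w) * (t + ll)⁻¹ := by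
        have hθ_nonneg := absTheta_nonneg ts z
        have hθ_le_iSup := absTheta_le_iSup_Icc (fun j => (hts j).le) hll.le hz
        gcongr
        · linarith
        · exact hz.1
    _ = _ := by rw [one_mul, mul_comm]; rfl

/-- scalar rational approximation error bound for the resolvent. -/
theorem stmt_9 {k : ℕ} (ll lu t : ℝ) (hll : 0 < ll) (hlu : ll ≤ lu) (ht : 0 ≤ t)
    (ts : Fin k → ℝ) (hts : ∀ j, 0 < ts j) (htsinj : Function.Injective ts) :
    ∃ p : Polynomial ℝ, p.degree ≤ (k : ℕ) ∧
      ∀ z ∈ Set.Icc ll lu,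
        |(t + z)⁻¹ - p.eval z / ∏ j, (z + ts j)|
          ≤ (t + ll)⁻¹ * ⨆ w : Set.Icc ll lu, ∏ j, |(w : ℝ) - ts j| / |(w : ℝ) + ts j| :=
  stmt_9_general ll lu t hll ht ts hts
end

section
/- Let L be symmetric positive definite with eigenvalues in [λ_1, λ_n], s ∈ (0,1), and suppose for every t ≥ 0 the reduced basis approximation satisfies ‖(tI+L)^{-1}b − V(tI_{k+1}+L_{k+1})^{-1}Vᵀb‖ ≤ 2C (t+λ_1)^{-1} δ_k ‖b‖ for some δ_k ≥ 0. Then ‖L^{−s}b − V L_{k+1}^{−s} Vᵀ b‖ ≤ 2C λ_1^{−s} δ_k ‖b‖. -/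
/-!
`L` and its compression `Vᵀ L V` are diagonalised by orthogonal matrices, so `L ^ (-s) b` and
`V (Vᵀ L V) ^ (-s) Vᵀ b` are finite sums of eigencomponents weighted by `λ ^ (-s)`. By
Balakrishnan's formula `λ ^ (-s) = K⁻¹ ∫₀^∞ t ^ (-s) (t + λ)⁻¹ dt`, their difference is the same
transform of the resolvent error `t ↦ (t + L)⁻¹ b - V (t + Vᵀ L V)⁻¹ Vᵀ b`. Integrating the assumed
bound `c (t + λ₁)⁻¹` on that error against `t ^ (-s)` gives `c λ₁ ^ (-s)`, again by Balakrishnan.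
-/

open Matrix

noncomputable def enormVec {n : ℕ} (v : Fin n → ℝ) : ℝ := Real.sqrt (∑ i, v i ^ 2)

open MeasureTheory Set Real

section Balakrishnan

variable {s : ℝ}

lemma rpow_neg_mul_inv_add_eqOn {a : ℝ} (hs : s ∈ Ioo 0 1) (ha : 0 < a) :
    EqOn (fun t : ℝ => t ^ (-s) * (t + a)⁻¹)
      (fun t => a⁻¹ * rpowIntegrand₀₁ (1 - s) t a) (Ioi 0) := by
  intro t ht
  simp only [rpowIntegrand₀₁_eq_pow_div (Ioo.one_sub_mem hs) (le_of_lt ht) ha.le,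
    sub_sub_cancel_left]
  field_simp

lemma integrableOn_rpow_neg_mul_inv_add {a : ℝ} (hs : s ∈ Ioo 0 1) (ha : 0 < a) :
    IntegrableOn (fun t : ℝ => t ^ (-s) * (t + a)⁻¹) (Ioi 0) :=
  (integrableOn_congr_fun (rpow_neg_mul_inv_add_eqOn hs ha) measurableSet_Ioi).2
    ((integrableOn_rpowIntegrand₀₁_Ioi (Ioo.one_sub_mem hs) ha.le).const_mul a⁻¹)

lemma integral_rpow_neg_mul_inv_add {a : ℝ} (hs : s ∈ Ioo 0 1) (ha : 0 < a) :
    ∫ t in Ioi 0, t ^ (-s) * (t + a)⁻¹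
      = a ^ (-s) * ∫ t in Ioi 0, rpowIntegrand₀₁ (1 - s) t 1 := by
  rw [setIntegral_congr_fun measurableSet_Ioi (rpow_neg_mul_inv_add_eqOn hs ha),
    integral_const_mul, integral_rpowIntegrand₀₁_eq_rpow_mul_const (Ioo.one_sub_mem hs) ha.le,
    ← mul_assoc, rpow_sub ha, rpow_one, rpow_neg ha.le]
  field_simp

variable {E : Type*} [NormedAddCommGroup E] [NormedSpace ℝ E]

/-- Balakrishnan's transform `K⁻¹ ∫₀^∞ t ^ (-s) g t dt`, normalised so that it sends
`t ↦ (t + a)⁻¹` to `a ^ (-s)`: here `rpowIntegrand₀₁ (1 - s) t 1 = t ^ (-s) * (t + 1)⁻¹`,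
so `K = ∫₀^∞ t ^ (-s) (t + 1)⁻¹ dt = π / sin (π s)`. -/
noncomputable def balakrishnan (s : ℝ) (g : ℝ → E) : E :=
  (∫ t in Ioi 0, rpowIntegrand₀₁ (1 - s) t 1)⁻¹ • ∫ t in Ioi 0, t ^ (-s) • g t

lemma balakrishnan_congr {f g : ℝ → E} (h : EqOn f g (Ioi 0)) :
    balakrishnan s f = balakrishnan s g := by
  rw [balakrishnan, balakrishnan,
    setIntegral_congr_fun measurableSet_Ioi (fun t ht => congrArg _ (h ht))]

lemma balakrishnan_sub {f g : ℝ → E} (hf : IntegrableOn (fun t => t ^ (-s) • f t) (Ioi 0))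
    (hg : IntegrableOn (fun t => t ^ (-s) • g t) (Ioi 0)) :
    balakrishnan s (fun t => f t - g t) = balakrishnan s f - balakrishnan s g := by
  simp only [balakrishnan, smul_sub, integral_sub hf hg]

lemma integrableOn_rpow_neg_smul_sum_inv_add {ι : Type*} [Fintype ι] (hs : s ∈ Ioo 0 1)
    {w : ι → ℝ} (hw : ∀ j, 0 < w j) (v : ι → E) :
    IntegrableOn (fun t : ℝ => t ^ (-s) • ∑ j, (t + w j)⁻¹ • v j) (Ioi 0) := by
  simp only [Finset.smul_sum, smul_smul]
  exact integrable_finsetSum _ fun j _ =>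
    (integrableOn_rpow_neg_mul_inv_add hs (hw j)).smul_const (v j)

lemma balakrishnan_sum_inv_add [CompleteSpace E] {ι : Type*} [Fintype ι] (hs : s ∈ Ioo 0 1)
    {w : ι → ℝ} (hw : ∀ j, 0 < w j) (v : ι → E) :
    balakrishnan s (fun t => ∑ j, (t + w j)⁻¹ • v j) = ∑ j, w j ^ (-s) • v j := by
  have hK : (∫ t in Ioi 0, rpowIntegrand₀₁ (1 - s) t 1) ≠ 0 :=
    (integral_rpowIntegrand₀₁_one_pos (Ioo.one_sub_mem hs)).ne'
  simp only [balakrishnan, Finset.smul_sum, smul_smul]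
  rw [integral_finsetSum _ fun j _ =>
    (integrableOn_rpow_neg_mul_inv_add hs (hw j)).smul_const (v j), Finset.smul_sum]
  refine Finset.sum_congr rfl fun j _ => ?_
  rw [integral_smul_const, integral_rpow_neg_mul_inv_add hs (hw j), smul_smul]
  field_simp

lemma norm_balakrishnan_le {a c : ℝ} (hs : s ∈ Ioo 0 1) (ha : 0 < a) {g : ℝ → E}
    (hg : ∀ t > 0, ‖g t‖ ≤ c * (t + a)⁻¹) :
    ‖balakrishnan s g‖ ≤ c * a ^ (-s) := by
  have hK : 0 < ∫ t in Ioi 0, rpowIntegrand₀₁ (1 - s) t 1 :=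
    integral_rpowIntegrand₀₁_one_pos (Ioo.one_sub_mem hs)
  have hint : ‖∫ t in Ioi 0, t ^ (-s) • g t‖ ≤ ∫ t in Ioi 0, c * (t ^ (-s) * (t + a)⁻¹) := by
    refine norm_integral_le_of_norm_le ((integrableOn_rpow_neg_mul_inv_add hs ha).const_mul c) ?_
    filter_upwards [ae_restrict_mem measurableSet_Ioi] with t (ht : 0 < t)
    rw [norm_smul, norm_of_nonneg (rpow_nonneg ht.le _)]
    calc t ^ (-s) * ‖g t‖ ≤ t ^ (-s) * (c * (t + a)⁻¹) := by gcongr; exact hg t ht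
      _ = c * (t ^ (-s) * (t + a)⁻¹) := by ring
  rw [integral_const_mul, integral_rpow_neg_mul_inv_add hs ha] at hint
  rw [balakrishnan, norm_smul, norm_inv, norm_of_nonneg hK.le, inv_mul_le_iff₀ hK]
  linarith

end Balakrishnan

section SpectralDecomposition

variable {m p 𝕜 : Type*} [Fintype m] [Fintype p] [DecidableEq p]

lemma conj_diagonal_mulVec [CommSemiring 𝕜] (W : Matrix m p 𝕜) (f : p → 𝕜) (b : m → 𝕜) :
    (W * diagonal f * Wᵀ) *ᵥ b = ∑ j, f j • ((Wᵀ *ᵥ b) j • Wᵀ j) := by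
  rw [← mulVec_mulVec, ← mulVec_mulVec, mulVec_eq_sum]
  refine Finset.sum_congr rfl fun j _ => ?_
  rw [mulVec_diagonal, op_smul_eq_smul, smul_smul]

lemma resolvent_conj_diagonal [Field 𝕜] (Q : Matrix p p 𝕜) (hQ : Qᵀ * Q = 1) (hQ' : Q * Qᵀ = 1)
    (w : p → 𝕜) {t : 𝕜} (ht : ∀ j, t + w j ≠ 0) :
    (t • (1 : Matrix p p 𝕜) + Q * diagonal w * Qᵀ)⁻¹
      = Q * diagonal (fun j => (t + w j)⁻¹) * Qᵀ := by
  have hshift : t • (1 : Matrix p p 𝕜) + Q * diagonal w * Qᵀ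
      = Q * diagonal (fun j => t + w j) * Qᵀ :=
    calc t • (1 : Matrix p p 𝕜) + Q * diagonal w * Qᵀ
        = Q * (t • 1) * Qᵀ + Q * diagonal w * Qᵀ := by
          rw [Matrix.mul_smul, Matrix.mul_one, Matrix.smul_mul, hQ']
      _ = Q * diagonal (fun j => t + w j) * Qᵀ := by
          rw [smul_one_eq_diagonal, ← Matrix.add_mul, ← Matrix.mul_add, diagonal_add]
  rw [hshift]
  refine inv_eq_right_inv ?_
  calc Q * diagonal (fun j => t + w j) * Qᵀ * (Q * diagonal (fun j => (t + w j)⁻¹) * Qᵀ)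
      = Q * (diagonal (fun j => t + w j) * (Qᵀ * Q) * diagonal (fun j => (t + w j)⁻¹)) * Qᵀ := by
        simp only [Matrix.mul_assoc]
    _ = 1 := by
        rw [hQ, Matrix.mul_one, diagonal_mul_diagonal]
        simp only [mul_inv_cancel₀ (ht _), diagonal_one, Matrix.mul_one, hQ']

end SpectralDecomposition

lemma enormVec_eq_norm_toLp {n : ℕ} (v : Fin n → ℝ) :
    enormVec v = ‖(WithLp.toLp 2 v : EuclideanSpace ℝ (Fin n))‖ := by
  simp [enormVec, EuclideanSpace.norm_eq]

theorem stmt_15_general {n k : ℕ} (L Q : Matrix (Fin n) (Fin n) ℝ)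
    (V : Matrix (Fin n) (Fin (k + 1)) ℝ)
    (P : Matrix (Fin (k + 1)) (Fin (k + 1)) ℝ)
    (l1 ln s C delta : ℝ)
    (lam : Fin n → ℝ) (mu : Fin (k + 1) → ℝ) (b : Fin n → ℝ)
    (hs : s ∈ Set.Ioo (0 : ℝ) 1)
    (h1 : 0 < l1)
    (hQ : Qᵀ * Q = 1) (hQ' : Q * Qᵀ = 1)
    (hL : L = Q * Matrix.diagonal lam * Qᵀ)
    (hlam : ∀ i, lam i ∈ Set.Icc l1 ln)
    (hP : Pᵀ * P = 1) (hP' : P * Pᵀ = 1)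
    (hmu : ∀ i, 0 < mu i)
    (hLk : Vᵀ * L * V = P * Matrix.diagonal mu * Pᵀ)
    (hres : ∀ t : ℝ, 0 ≤ t →
      enormVec ((t • (1 : Matrix (Fin n) (Fin n) ℝ) + L)⁻¹ *ᵥ b
          - (V * (t • (1 : Matrix (Fin (k + 1)) (Fin (k + 1)) ℝ) + Vᵀ * L * V)⁻¹ * Vᵀ) *ᵥ b)
        ≤ 2 * C * (t + l1)⁻¹ * delta * enormVec b) :
    enormVec ((Q * Matrix.diagonal (fun i => lam i ^ (-s)) * Qᵀ) *ᵥ b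
        - (V * (P * Matrix.diagonal (fun i => mu i ^ (-s)) * Pᵀ) * Vᵀ) *ᵥ b)
      ≤ 2 * C * l1 ^ (-s) * delta * enormVec b := by
  have hlam0 : ∀ i, 0 < lam i := fun i => h1.trans_le (hlam i).1
  set W := V * P
  set x : Fin n → EuclideanSpace ℝ (Fin n) := fun j => WithLp.toLp 2 ((Qᵀ *ᵥ b) j • Qᵀ j)
  set y : Fin (k + 1) → EuclideanSpace ℝ (Fin n) := fun j => WithLp.toLp 2 ((Wᵀ *ᵥ b) j • Wᵀ j)
  have hspec : ∀ (f : Fin n → ℝ) (g : Fin (k + 1) → ℝ), WithLp.toLp 2 ((Q * diagonal f * Qᵀ) *ᵥ b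
      - (V * (P * diagonal g * Pᵀ) * Vᵀ) *ᵥ b) = ∑ j, f j • x j - ∑ j, g j • y j := by
    intro f g
    have hW : V * (P * diagonal g * Pᵀ) * Vᵀ = W * diagonal g * Wᵀ := by
      simp only [W, transpose_mul, Matrix.mul_assoc]
    rw [hW, conj_diagonal_mulVec, conj_diagonal_mulVec]
    simp [x, y]
  have hresolvent : ∀ t > 0, WithLp.toLp 2 ((t • (1 : Matrix (Fin n) (Fin n) ℝ) + L)⁻¹ *ᵥ b
      - (V * (t • (1 : Matrix (Fin (k + 1)) (Fin (k + 1)) ℝ) + Vᵀ * L * V)⁻¹ * Vᵀ) *ᵥ b)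
      = ∑ j, (t + lam j)⁻¹ • x j - ∑ j, (t + mu j)⁻¹ • y j := by
    intro t ht
    rw [hLk, hL, resolvent_conj_diagonal Q hQ hQ' lam fun j => (add_pos ht (hlam0 j)).ne',
      resolvent_conj_diagonal P hP hP' mu fun j => (add_pos ht (hmu j)).ne', hspec]
  rw [enormVec_eq_norm_toLp, hspec, ← balakrishnan_sum_inv_add hs hlam0,
    ← balakrishnan_sum_inv_add hs hmu,
    ← balakrishnan_sub (integrableOn_rpow_neg_smul_sum_inv_add hs hlam0 x)
      (integrableOn_rpow_neg_smul_sum_inv_add hs hmu y),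
    ← balakrishnan_congr hresolvent]
  refine (norm_balakrishnan_le (c := 2 * C * delta * enormVec b) hs h1 fun t ht => ?_).trans_eq
    (by ring)
  rw [← enormVec_eq_norm_toLp]
  exact (hres t ht.le).trans_eq (by ring)

/-- from a uniform resolvent error bound to an error bound
for the fractional power (Theorem 4.3 mechanism). -/
theorem stmt_15 {n k : ℕ} (L Q : Matrix (Fin n) (Fin n) ℝ)
    (V : Matrix (Fin n) (Fin (k + 1)) ℝ)
    (P : Matrix (Fin (k + 1)) (Fin (k + 1)) ℝ)
    (l1 ln s C delta : ℝ)
    (lam : Fin n → ℝ) (mu : Fin (k + 1) → ℝ) (b : Fin n → ℝ)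
    (hs : s ∈ Set.Ioo (0 : ℝ) 1)
    (h1 : 0 < l1) (hC : 0 ≤ C) (hdelta : 0 ≤ delta)
    (hQ : Qᵀ * Q = 1) (hQ' : Q * Qᵀ = 1)
    (hL : L = Q * Matrix.diagonal lam * Qᵀ)
    (hlam : ∀ i, lam i ∈ Set.Icc l1 ln)
    (hV : Vᵀ * V = 1)
    (hP : Pᵀ * P = 1) (hP' : P * Pᵀ = 1)
    (hmu : ∀ i, 0 < mu i)
    (hLk : Vᵀ * L * V = P * Matrix.diagonal mu * Pᵀ)
    (hres : ∀ t : ℝ, 0 ≤ t →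
      enormVec ((t • (1 : Matrix (Fin n) (Fin n) ℝ) + L)⁻¹ *ᵥ b
          - (V * (t • (1 : Matrix (Fin (k + 1)) (Fin (k + 1)) ℝ) + Vᵀ * L * V)⁻¹ * Vᵀ) *ᵥ b)
        ≤ 2 * C * (t + l1)⁻¹ * delta * enormVec b) :
    enormVec ((Q * Matrix.diagonal (fun i => lam i ^ (-s)) * Qᵀ) *ᵥ b
        - (V * (P * Matrix.diagonal (fun i => mu i ^ (-s)) * Pᵀ) * Vᵀ) *ᵥ b)
      ≤ 2 * C * l1 ^ (-s) * delta * enormVec b :=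
  stmt_15_general L Q V P l1 ln s C delta lam mu b hs h1 hQ hQ' hL hlam hP hP' hmu hLk hres
end
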